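/- arXiv:2003.11311 — 2 statements merged into one kernel-verified Lean document; each statement's English description precedes it below -/
import Mathlib

section
/- For every partial order c on a finite set of cardinality n, Q(c) ≤ Σ_{k=0}^{n} C(n,k)·|t_k|, and the n-element antichain attains this bound. Consequently, if λ(n,0) ≠ 0, then the maximum of ζ(c) over all partial orders c on a set of cardinality n equals ζ_n^a, the value at the n-element antichain. -/
open MeasureTheory Filter Finset

attribute [local instance] Classical.propDecidable

noncomputable section

/-- A relation on ℕ representing a naturally labelled past-finite causal set:
a strict partial order `r` with `r i j → i < j`. -/
def CausalRel (r : ℕ → ℕ → Prop) : Prop :=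
  (∀ i, ¬ r i i) ∧ (∀ i j k, r i j → r j k → r i k) ∧ (∀ i j, r i j → i < j)

/-- Ω, the sample space of naturally labelled past-finite causal sets. -/
def Omega : Type := {r : ℕ → ℕ → Prop // CausalRel r}

/-- An `n`-node: a strict partial order on `Fin n` compatible with the labelling. -/
def IsNode {n : ℕ} (p : Fin n → Fin n → Prop) : Prop :=
  (∀ i, ¬ p i i) ∧ (∀ i j k, p i j → p j k → p i k) ∧
    (∀ i j : Fin n, p i j → (i : ℕ) < (j : ℕ))

/-- The cylinder set of an `n`-node. -/
def Cyl {n : ℕ} (p : Fin n → Fin n → Prop) : Set Omega :=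
  {r | ∀ i j : Fin n, r.1 i.1 j.1 ↔ p i j}

/-- The Boolean set algebra 𝔜 generated by the cylinder sets (and Ω itself) under
finite unions, intersections and complements. -/
inductive InAlg : Set Omega → Prop
  | basic {n : ℕ} (hn : 1 ≤ n) (p : Fin n → Fin n → Prop) (hp : IsNode p) : InAlg (Cyl p)
  | univ : InAlg Set.univ
  | compl (s : Set Omega) : InAlg s → InAlg sᶜ
  | union (s t : Set Omega) : InAlg s → InAlg t → InAlg (s ∪ t)

/-- Finite additivity of a complex set function on the algebra 𝔜. -/
def FinitelyAdditive (μ : Set Omega → ℂ) : Prop :=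
  ∀ s t : Set Omega, InAlg s → InAlg t → Disjoint s t → μ (s ∪ t) = μ s + μ t

/-- A finite partition of Ω into pairwise disjoint members of 𝔜. -/
def IsPartition (π : Finset (Set Omega)) : Prop :=
  (∀ s ∈ π, InAlg s) ∧ ((↑π : Set (Set Omega)).Pairwise Disjoint) ∧
    ⋃₀ (↑π : Set (Set Omega)) = Set.univ

/-- Bounded variation: the sums Σᵢ |μ(αᵢ)| over finite partitions of Ω into members
of 𝔜 are uniformly bounded. -/
def BoundedVariation (μ : Set Omega → ℂ) : Prop :=
  ∃ M : ℝ, ∀ π : Finset (Set Omega), IsPartition π → ∑ s ∈ π, ‖μ s‖ ≤ M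

/-- λ(a,b) = Σ_{k=b}^{a} C(a−b, k−b)·t_k. -/
def lam (t : ℕ → ℂ) (a b : ℕ) : ℂ :=
  ∑ k ∈ Finset.Icc b a, ((a - b).choose (k - b) : ℂ) * t k

/-- The maximal elements of a finite subset `I` with respect to the relation `c`. -/
def maxIn {n : ℕ} (c : Fin n → Fin n → Prop) (I : Finset (Fin n)) : Finset (Fin n) :=
  I.filter fun i => ∀ j ∈ I, ¬ c i j

/-- The past of the element `m` in the node `p`. -/
def pastOf {n : ℕ} (p : Fin n → Fin n → Prop) (m : Fin n) : Finset (Fin n) :=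
  Finset.univ.filter fun i => p i m

/-- The ℂSG amplitude of (the cylinder set of) an `n`-node:
∏_{m=1}^{n−1} λ(ϖ_m, μ_m)/λ(m,0). -/
def amp (t : ℕ → ℂ) {n : ℕ} (p : Fin n → Fin n → Prop) : ℂ :=
  ∏ m ∈ Finset.univ.filter (fun m : Fin n => 1 ≤ (m : ℕ)),
    lam t (pastOf p m).card (maxIn p (pastOf p m)).card / lam t (m : ℕ) 0

/-- μ is the ℂSG measure associated to the coupling constants t: it is finitely
additive on 𝔜 and takes the prescribed values on cylinder sets. -/
def IsCSG (t : ℕ → ℂ) (μ : Set Omega → ℂ) : Prop :=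
  FinitelyAdditive μ ∧
    ∀ (n : ℕ), 1 ≤ n → ∀ p : Fin n → Fin n → Prop, IsNode p → μ (Cyl p) = amp t p

/-- `I` is an order ideal (downward-closed set) of the relation `c`. -/
def isIdeal {n : ℕ} (c : Fin n → Fin n → Prop) (I : Finset (Fin n)) : Prop :=
  ∀ j ∈ I, ∀ i, c i j → i ∈ I

/-- Q(c) := Σ_{I an order ideal of c} |λ(|I|, m(I))|. -/
def Qval (t : ℕ → ℂ) {n : ℕ} (c : Fin n → Fin n → Prop) : ℝ :=
  ∑ I ∈ Finset.univ.filter (fun I : Finset (Fin n) => isIdeal c I),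
    ‖lam t I.card (maxIn c I).card‖

/-- ζ(c) := Q(c)/|λ(n,0)| − 1. -/
def zeta (t : ℕ → ℂ) {n : ℕ} (c : Fin n → Fin n → Prop) : ℝ :=
  Qval t c / ‖lam t n 0‖ - 1

/-- ζ_n^a := (Σ_{k=0}^{n} C(n,k)·|t_k|)/|λ(n,0)| − 1. -/
def zetaA (t : ℕ → ℂ) (n : ℕ) : ℝ :=
  (∑ k ∈ Finset.range (n + 1), (n.choose k : ℝ) * ‖t k‖) /
    ‖lam t n 0‖ - 1

/-- ζ_n^c := (|t_0| + Σ_{ϖ=1}^{n} |λ(ϖ,1)|)/|λ(n,0)| − 1. -/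
def zetaC (t : ℕ → ℂ) (n : ℕ) : ℝ :=
  (‖t 0‖ + ∑ w ∈ Finset.Icc 1 n, ‖lam t w 1‖) /
    ‖lam t n 0‖ - 1

/-- S_n := Σ_{p an n-node} |μ(Cyl(p))|. -/
def Svar (μ : Set Omega → ℂ) (n : ℕ) : ℝ :=
  ∑ p : {p : Fin n → Fin n → Prop // IsNode p}, ‖μ (Cyl p.1)‖

/-!
Every subset `J` of `Fin n` generates an order ideal, its down-closure, and the subsets generating
an ideal `I` are exactly those with `max I ⊆ J ⊆ I`. Grouped by size, these number
`C(|I| - m(I), k - m(I))` of size `k`, so the triangle inequality bounds `|λ(|I|, m(I))|` by the sum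
of `|t_{|J|}|` over the subsets `J` generating `I`. Summing over all ideals, every subset of
`Fin n` is counted exactly once, which gives `Q(c) ≤ Σ_k C(n,k) |t_k|`. For the antichain every
subset is an ideal consisting of maximal elements only, and the bound is attained.
-/

theorem Finset.sum_Icc_finset_apply_card {α M : Type*} [DecidableEq α] [AddCommMonoid M]
    (f : ℕ → M) {s t : Finset α} (hst : s ⊆ t) :
    ∑ u ∈ Icc s t, f #u = ∑ k ∈ Icc #s #t, (#t - #s).choose (k - #s) • f k := by
  have hdisj : ∀ u ∈ (t \ s).powerset, Disjoint s u := fun u hu =>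
    disjoint_sdiff.mono_right (mem_powerset.1 hu)
  rw [Icc_eq_image_powerset hst, sum_image, sum_congr rfl fun u hu => by
      rw [card_union_of_disjoint (hdisj u hu)],
    sum_powerset_apply_card (fun m => f (#s + m)), card_sdiff_of_subset hst,
    ← Ico_add_one_right_eq_Icc, sum_Ico_eq_sum_range, Nat.sub_add_comm (card_le_card hst)]
  · simp only [Nat.add_sub_cancel_left]
  · intro u hu v hv huv
    rw [← union_sdiff_cancel_left (hdisj u hu), ← union_sdiff_cancel_left (hdisj v hv)]
    exact congrArg (· \ s) huv

theorem Finset.sum_finset_apply_card {α M : Type*} [Fintype α] [AddCommMonoid M] (f : ℕ → M) :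
    ∑ s : Finset α, f #s =
      ∑ k ∈ range (Fintype.card α + 1), (Fintype.card α).choose k • f k := by
  rw [← powerset_univ, sum_powerset_apply_card, card_univ]

theorem norm_lam_le (t : ℕ → ℂ) (a b : ℕ) :
    ‖lam t a b‖ ≤ ∑ k ∈ Icc b a, ((a - b).choose (k - b) : ℝ) * ‖t k‖ := by
  refine (norm_sum_le _ _).trans_eq (sum_congr rfl fun k _ => ?_)
  rw [norm_mul, Complex.norm_natCast]

section StrictOrder

variable {n : ℕ} {c : Fin n → Fin n → Prop}

theorem exists_mem_maxIn_of_mem (hirr : ∀ i, ¬ c i i) (htr : ∀ i j k, c i j → c j k → c i k)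
    {I : Finset (Fin n)} {x : Fin n} (hx : x ∈ I) : ∃ m ∈ maxIn c I, x = m ∨ c x m := by
  have : IsTrans (Fin n) (flip c) := ⟨fun a b d hab hbd => htr _ _ _ hbd hab⟩
  have : Std.Irrefl (flip c) := ⟨hirr⟩
  obtain ⟨m, ⟨hmI, hxm⟩, hmin⟩ := (Finite.wellFounded_of_trans_of_irrefl (flip c)).has_min
    {y | y ∈ I ∧ (x = y ∨ c x y)} ⟨x, hx, Or.inl rfl⟩
  refine ⟨m, mem_filter.2 ⟨hmI, fun j hj hmj => hmin j ⟨hj, ?_⟩ hmj⟩, hxm⟩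
  rcases hxm with rfl | hxm
  exacts [Or.inr hmj, Or.inr (htr _ _ _ hxm hmj)]

def downClosure (c : Fin n → Fin n → Prop) (J : Finset (Fin n)) : Finset (Fin n) :=
  univ.filter fun i => i ∈ J ∨ ∃ j ∈ J, c i j

theorem isIdeal_downClosure (htr : ∀ i j k, c i j → c j k → c i k) (J : Finset (Fin n)) :
    isIdeal c (downClosure c J) := by
  intro j hj i hij
  simp only [downClosure, mem_filter, mem_univ, true_and] at hj ⊢
  rcases hj with hj | ⟨k, hk, hjk⟩
  exacts [Or.inr ⟨j, hj, hij⟩, Or.inr ⟨k, hk, htr _ _ _ hij hjk⟩]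

theorem downClosure_eq_iff (hirr : ∀ i, ¬ c i i) (htr : ∀ i j k, c i j → c j k → c i k)
    {I J : Finset (Fin n)} (hI : isIdeal c I) :
    downClosure c J = I ↔ maxIn c I ⊆ J ∧ J ⊆ I := by
  simp only [Finset.ext_iff, downClosure, mem_filter, mem_univ, true_and]
  constructor
  · intro h
    have hJI : J ⊆ I := fun j hj => (h j).1 (Or.inl hj)
    refine ⟨fun m hm => ?_, hJI⟩
    obtain ⟨hmI, hmax⟩ := mem_filter.1 hm
    rcases (h m).2 hmI with hmJ | ⟨j, hj, hmj⟩
    exacts [hmJ, absurd hmj (hmax j (hJI hj))]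
  · rintro ⟨hMJ, hJI⟩ x
    constructor
    · rintro (hx | ⟨j, hj, hxj⟩)
      exacts [hJI hx, hI j (hJI hj) x hxj]
    · intro hx
      obtain ⟨m, hm, rfl | hxm⟩ := exists_mem_maxIn_of_mem hirr htr hx
      exacts [Or.inl (hMJ hm), Or.inr ⟨m, hMJ hm, hxm⟩]

theorem norm_lam_le_sum_downClosure_eq (t : ℕ → ℂ) (hirr : ∀ i, ¬ c i i)
    (htr : ∀ i j k, c i j → c j k → c i k) {I : Finset (Fin n)} (hI : isIdeal c I) :
    ‖lam t #I #(maxIn c I)‖ ≤ ∑ J with downClosure c J = I, ‖t #J‖ := by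
  have hfiber : ({J | downClosure c J = I} : Finset (Finset (Fin n))) = Icc (maxIn c I) I := by
    ext J
    rw [mem_filter, mem_Icc, downClosure_eq_iff hirr htr hI, and_iff_right (mem_univ J)]
  rw [hfiber, sum_Icc_finset_apply_card (fun k => ‖t k‖) (s := maxIn c I) (filter_subset _ I)]
  simpa only [nsmul_eq_mul] using norm_lam_le t #I #(maxIn c I)

theorem Qval_le (t : ℕ → ℂ) (hirr : ∀ i, ¬ c i i) (htr : ∀ i j k, c i j → c j k → c i k) :
    Qval t c ≤ ∑ k ∈ range (n + 1), (n.choose k : ℝ) * ‖t k‖ :=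
  calc Qval t c ≤ ∑ I with isIdeal c I, ∑ J with downClosure c J = I, ‖t #J‖ :=
        sum_le_sum fun I hI => norm_lam_le_sum_downClosure_eq t hirr htr (mem_filter.1 hI).2
    _ = ∑ J : Finset (Fin n), ‖t #J‖ :=
        sum_fiberwise_of_maps_to (fun J _ => mem_filter.2 ⟨mem_univ _, isIdeal_downClosure htr J⟩) _
    _ = _ := by simp only [sum_finset_apply_card (fun k => ‖t k‖), Fintype.card_fin, nsmul_eq_mul]

end StrictOrder

theorem Qval_antichain (t : ℕ → ℂ) (n : ℕ) :
    Qval t (fun _ _ : Fin n => False) = ∑ k ∈ range (n + 1), (n.choose k : ℝ) * ‖t k‖ := by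
  have hmax (I : Finset (Fin n)) : maxIn (fun _ _ => False) I = I := by simp [maxIn]
  rw [Qval, filter_true_of_mem fun I _ j _ i h => h.elim]
  simp only [hmax, lam, Nat.sub_self, Icc_self, sum_singleton, Nat.choose_self, Nat.cast_one,
    one_mul, sum_finset_apply_card (fun k => ‖t k‖), Fintype.card_fin, nsmul_eq_mul]

/-- Q(c) ≤ Σ_{k=0}^{n} C(n,k)·|t_k| for every (strict) partial order c on a
set of cardinality n, the n-antichain attains the bound, and hence if λ(n,0) ≠ 0 the
maximum of ζ(c) over all such partial orders is ζ_n^a, attained at the antichain. -/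
theorem statement_6 (t : ℕ → ℂ) (n : ℕ) :
    (∀ c : Fin n → Fin n → Prop, (∀ i, ¬ c i i) → (∀ i j k, c i j → c j k → c i k) →
      Qval t c ≤ ∑ k ∈ Finset.range (n + 1), (n.choose k : ℝ) * ‖t k‖) ∧
    Qval t (fun _ _ : Fin n => False)
      = ∑ k ∈ Finset.range (n + 1), (n.choose k : ℝ) * ‖t k‖ ∧
    (lam t n 0 ≠ 0 →
      IsGreatest {x : ℝ | ∃ c : Fin n → Fin n → Prop,
          (∀ i, ¬ c i i) ∧ (∀ i j k, c i j → c j k → c i k) ∧ x = zeta t c}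
        (zetaA t n)) := by
  refine ⟨fun c => Qval_le t, Qval_antichain t n, fun hlam => ⟨?_, ?_⟩⟩
  · exact ⟨fun _ _ => False, fun _ h => h, fun _ _ _ h _ => h, by rw [zeta, zetaA, Qval_antichain]⟩
  · rintro x ⟨c, hirr, htr, rfl⟩
    have := norm_pos_iff.2 hlam
    rw [zeta, zetaA]
    gcongr
    exact Qval_le t hirr htr
end
end

section
/- If in addition every coupling constant t_k is a nonnegative real number, then the ℂSG measure μ_v associated to t is of bounded variation. -/
open MeasureTheory Filter Finset

attribute [local instance] Classical.propDecidable

noncomputable section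

/-
Every set of the algebra 𝔜 depends only on the relations among the first `N`
elements for some `N`, so it is a finite disjoint union of `N`-cylinders. When all `t_k ≥ 0`,
every `λ(a, b)` and hence every cylinder amplitude is a nonnegative real, so by finite
additivity `μ` is nonnegative on 𝔜. For a nonnegative finitely additive `μ` the sum
`Σᵢ |μ(αᵢ)|` over a partition is `|Σᵢ μ(αᵢ)| = |μ(Ω)|`.
-/

open scoped ComplexOrder

abbrev Node (n : ℕ) := {p : Fin n → Fin n → Prop // IsNode p}

def Omega.restrict (r : Omega) (N : ℕ) : Node N :=
  ⟨fun i j => r.1 i j, fun i => r.2.1 i, fun _ _ _ hij hjk => r.2.2.1 _ _ _ hij hjk,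
    fun _ _ h => r.2.2.2 _ _ h⟩

lemma Omega.mem_cyl_restrict (r : Omega) (N : ℕ) : r ∈ Cyl (r.restrict N).1 :=
  fun _ _ => Iff.rfl

lemma eq_restrict_of_mem_cyl {N : ℕ} {q : Node N} {r : Omega} (h : r ∈ Cyl q.1) :
    q = r.restrict N :=
  Subtype.ext <| funext fun i => funext fun j => propext (h i j).symm

lemma pairwiseDisjoint_cyl (N : ℕ) :
    (Set.univ : Set (Node N)).PairwiseDisjoint fun q => Cyl q.1 :=
  fun _ _ _ _ hne => Set.disjoint_left.2 fun _ hq hq' =>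
    hne ((eq_restrict_of_mem_cyl hq).trans (eq_restrict_of_mem_cyl hq').symm)

def DeterminedBelow (N : ℕ) (s : Set Omega) : Prop :=
  ∀ r r' : Omega, (∀ i < N, ∀ j < N, (r.1 i j ↔ r'.1 i j)) → r ∈ s → r' ∈ s

namespace DeterminedBelow

variable {N : ℕ} {s t : Set Omega}

lemma mono {M : ℕ} (h : DeterminedBelow N s) (hNM : N ≤ M) : DeterminedBelow M s :=
  fun r r' hrr' => h r r' fun i hi j hj => hrr' i (hi.trans_le hNM) j (hj.trans_le hNM)

lemma compl (h : DeterminedBelow N s) : DeterminedBelow N sᶜ :=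
  fun r r' hrr' hr hr' => hr (h r' r (fun i hi j hj => (hrr' i hi j hj).symm) hr')

lemma union (hs : DeterminedBelow N s) (ht : DeterminedBelow N t) :
    DeterminedBelow N (s ∪ t) :=
  fun r r' hrr' => Or.imp (hs r r' hrr') (ht r r' hrr')

lemma eq_biUnion_cyl (h : DeterminedBelow N s) :
    s = ⋃ q ∈ univ.filter (fun q : Node N => Cyl q.1 ⊆ s), Cyl q.1 := by
  ext r
  simp only [Set.mem_iUnion, mem_filter, mem_univ, true_and, exists_prop]
  refine ⟨fun hr => ⟨r.restrict N, fun r' hr' => ?_, r.mem_cyl_restrict N⟩,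
    fun ⟨q, hqs, hq⟩ => hqs hq⟩
  exact h r r' (fun i hi j hj => (hr' ⟨i, hi⟩ ⟨j, hj⟩).symm) hr

end DeterminedBelow

lemma determinedBelow_cyl {n : ℕ} (p : Fin n → Fin n → Prop) : DeterminedBelow n (Cyl p) :=
  fun _ _ hrr' hr i j => (hrr' i i.2 j j.2).symm.trans (hr i j)

lemma InAlg.eventually_determinedBelow {s : Set Omega} (h : InAlg s) :
    ∀ᶠ N in atTop, DeterminedBelow N s := by
  induction h with
  | @basic n _ p _ =>
    exact eventually_atTop.2 ⟨n, fun _ => (determinedBelow_cyl p).mono⟩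
  | univ => exact Eventually.of_forall fun _ _ _ _ _ => trivial
  | compl _ _ ih => exact ih.mono fun _ => DeterminedBelow.compl
  | union _ _ _ _ ihs iht => exact (ihs.and iht).mono fun _ h => h.1.union h.2

lemma InAlg.empty : InAlg (∅ : Set Omega) := by
  simpa using InAlg.compl _ InAlg.univ

lemma InAlg.biUnion {ι : Type*} (S : Finset ι) {f : ι → Set Omega}
    (hf : ∀ i ∈ S, InAlg (f i)) : InAlg (⋃ i ∈ S, f i) := by
  classical
  induction S using Finset.induction with
  | empty => simpa using InAlg.empty
  | insert a S _ ih =>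
    rw [set_biUnion_insert]
    exact InAlg.union _ _ (hf a (mem_insert_self a S))
      (ih fun i hi => hf i (mem_insert_of_mem hi))

namespace FinitelyAdditive

variable {μ : Set Omega → ℂ}

lemma map_empty (hμ : FinitelyAdditive μ) : μ ∅ = 0 := by
  simpa using hμ ∅ ∅ InAlg.empty InAlg.empty (disjoint_bot_left)

lemma map_biUnion (hμ : FinitelyAdditive μ) {ι : Type*} (S : Finset ι) {f : ι → Set Omega}
    (hf : ∀ i ∈ S, InAlg (f i)) (hdisj : (S : Set ι).PairwiseDisjoint f) :
    μ (⋃ i ∈ S, f i) = ∑ i ∈ S, μ (f i) := by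
  classical
  induction S using Finset.induction with
  | empty => simpa using hμ.map_empty
  | insert a S haS ih =>
    rw [coe_insert, Set.pairwiseDisjoint_insert_of_notMem (mem_coe.not.2 haS)] at hdisj
    have hfS : ∀ i ∈ S, InAlg (f i) := fun i hi => hf i (mem_insert_of_mem hi)
    have hdisj_a : Disjoint (f a) (⋃ i ∈ S, f i) :=
      Set.disjoint_iUnion₂_right.2 fun i hi => hdisj.2 i hi
    rw [set_biUnion_insert, sum_insert haS,
      hμ _ _ (hf a (mem_insert_self a S)) (InAlg.biUnion S hfS) hdisj_a, ih hfS hdisj.1]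

lemma sum_eq_of_isPartition (hμ : FinitelyAdditive μ) {π : Finset (Set Omega)}
    (hπ : IsPartition π) : ∑ s ∈ π, μ s = μ Set.univ := by
  obtain ⟨hπ_alg, hπ_disj, hπ_cover⟩ := hπ
  rw [← hπ_cover, Set.sUnion_eq_biUnion]
  exact (hμ.map_biUnion π (f := id) hπ_alg hπ_disj).symm

lemma boundedVariation_of_nonneg (hμ : FinitelyAdditive μ)
    (hnonneg : ∀ s, InAlg s → 0 ≤ μ s) : BoundedVariation μ := by
  refine ⟨‖μ Set.univ‖, fun π hπ => le_of_eq ?_⟩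
  have hcast : ((∑ s ∈ π, ‖μ s‖ : ℝ) : ℂ) = μ Set.univ := by
    rw [← hμ.sum_eq_of_isPartition hπ, Complex.ofReal_sum]
    exact sum_congr rfl fun s hs => Complex.norm_of_nonneg' (hnonneg s (hπ.1 s hs))
  rw [← hcast, Complex.norm_real, Real.norm_of_nonneg (sum_nonneg fun _ _ => norm_nonneg _)]

end FinitelyAdditive

section Nonneg

variable {t : ℕ → ℂ} (ht : ∀ k, 0 ≤ t k)
include ht

lemma lam_nonneg (a b : ℕ) : 0 ≤ lam t a b :=
  sum_nonneg fun k _ => mul_nonneg (Nat.cast_nonneg _) (ht k)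

lemma amp_nonneg {n : ℕ} (p : Fin n → Fin n → Prop) : 0 ≤ amp t p :=
  prod_nonneg fun _ _ => div_nonneg (lam_nonneg ht _ _) (lam_nonneg ht _ _)

lemma IsCSG.nonneg {μ : Set Omega → ℂ} (hμ : IsCSG t μ) {s : Set Omega} (hs : InAlg s) :
    0 ≤ μ s := by
  obtain ⟨N, hN, hNpos⟩ := (hs.eventually_determinedBelow.and (eventually_ge_atTop 1)).exists
  rw [hN.eq_biUnion_cyl, hμ.1.map_biUnion _ (fun q _ => InAlg.basic hNpos q.1 q.2)
    ((pairwiseDisjoint_cyl N).subset (Set.subset_univ _))]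
  exact sum_nonneg fun q _ => (hμ.2 N hNpos q.1 q.2).symm ▸ amp_nonneg ht q.1

end Nonneg

theorem statement_9_general (t : ℕ → ℂ)
    (hreal : ∀ k : ℕ, ∃ s : ℝ, 0 ≤ s ∧ t k = (s : ℂ))
    (μ : Set Omega → ℂ) (hμ : IsCSG t μ) :
    BoundedVariation μ := by
  have ht : ∀ k, 0 ≤ t k := fun k => by
    obtain ⟨s, hs, hts⟩ := hreal k
    exact hts ▸ Complex.zero_le_real.2 hs
  exact hμ.1.boundedVariation_of_nonneg fun _ hs => hμ.nonneg ht hs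

/-- if every coupling constant t_k is a nonnegative real number, then the
ℂSG measure μ_v associated to t is of bounded variation. -/
theorem statement_9 (t : ℕ → ℂ) (ht0 : t 0 = 1) (hlam : ∀ m : ℕ, lam t m 0 ≠ 0)
    (hreal : ∀ k : ℕ, ∃ s : ℝ, 0 ≤ s ∧ t k = (s : ℂ))
    (μ : Set Omega → ℂ) (hμ : IsCSG t μ) :
    BoundedVariation μ :=
  statement_9_general t hreal μ hμ

end
end
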